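/- For every positive integer k and every set H of at most k vertices of the shift graph G_k, there exists a maximum independent set of G_k that is disjoint from H. Consequently, every set of vertices intersecting all maximum independent sets of G_k has size at least k+1. -/

import Mathlib

/-- A finset of vertices is independent: no two of its elements are adjacent. -/
def IsIndepF {V : Type*} (G : SimpleGraph V) (s : Finset V) : Prop :=
  ∀ a ∈ s, ∀ b ∈ s, ¬ G.Adj a b

/-- The independence number of a finite graph: the maximum size of an independent set. -/
noncomputable def indepNum {V : Type*} [Fintype V] (G : SimpleGraph V) : ℕ :=
  sSup {n | ∃ s : Finset V, IsIndepF G s ∧ s.card = n}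

/-- A maximum independent set: an independent set whose size is the independence number. -/
def IsMaxIndep {V : Type*} [Fintype V] (G : SimpleGraph V) (s : Finset V) : Prop :=
  IsIndepF G s ∧ s.card = indepNum G

/-- The vertex set of the shift graph: ordered pairs of distinct elements of `Fin (2k)`. -/
abbrev ShiftVert (k : ℕ) := {p : Fin (2 * k) × Fin (2 * k) // p.1 ≠ p.2}

/-- The shift graph `G_k`: two distinct vertices `(a,b)`, `(c,d)` are adjacent iff
`b = c` or `d = a`. -/
def shiftGraph (k : ℕ) : SimpleGraph (ShiftVert k) where
  Adj x y := x ≠ y ∧ (x.1.2 = y.1.1 ∨ y.1.2 = x.1.1)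
  symm := by
    refine ⟨?_⟩
    rintro x y ⟨hxy, h⟩
    exact ⟨hxy.symm, h.symm⟩
  loopless := by
    refine ⟨?_⟩
    rintro x ⟨hx, -⟩
    exact hx rfl

open Finset

/-- Upper bound: any independent set in the shift graph has size at most `k²`. -/
lemma shift_indep_card_le (k : ℕ) (s : Finset (ShiftVert k))
    (hs : IsIndepF (shiftGraph k) s) : s.card ≤ k * k := by
  classical
  set T := s.image (fun p : ShiftVert k => p.1.1) with hT
  set Hd := s.image (fun p : ShiftVert k => p.1.2) with hHd
  have hdisj : Disjoint T Hd := by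
    rw [Finset.disjoint_left]
    rintro x hx hx'
    simp only [hT, hHd, Finset.mem_image] at hx hx'
    obtain ⟨p, hp, hpx⟩ := hx
    obtain ⟨q, hq, hqx⟩ := hx'
    by_cases hpq : p = q
    · subst hpq
      exact p.2 (hpx.trans hqx.symm)
    · exact hs q hq p hp ⟨fun h => hpq h.symm, Or.inl (hqx.trans hpx.symm)⟩
  have hcard1 : s.card ≤ (T ×ˢ Hd).card := by
    apply Finset.card_le_card_of_injOn (fun p => (p.1.1, p.1.2))
    · intro p hp
      simp only [Finset.mem_product, hT, hHd, Finset.mem_image]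
      exact Finset.mem_product.mpr ⟨Finset.mem_image_of_mem _ hp, Finset.mem_image_of_mem _ hp⟩
    · intro p _ q _ h
      apply Subtype.ext
      exact Prod.ext (congrArg Prod.fst h) (congrArg Prod.snd h)
  rw [Finset.card_product] at hcard1
  have hsum : T.card + Hd.card ≤ 2 * k := by
    rw [← Finset.card_union_of_disjoint hdisj]
    calc (T ∪ Hd).card ≤ Fintype.card (Fin (2 * k)) := Finset.card_le_univ _
      _ = 2 * k := Fintype.card_fin _
  have : (T.card : ℤ) * Hd.card ≤ (k : ℤ) * k := by
    have h2 : (T.card : ℤ) + Hd.card ≤ 2 * k := by exact_mod_cast hsum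
    nlinarith [sq_nonneg ((T.card : ℤ) - Hd.card)]
  have : T.card * Hd.card ≤ k * k := by exact_mod_cast this
  omega

/-- The product set associated to `A`. -/
noncomputable def shiftProd (k : ℕ) (A : Finset (Fin (2 * k))) : Finset (ShiftVert k) :=
  Finset.univ.filter (fun p : ShiftVert k => p.1.1 ∈ A ∧ p.1.2 ∉ A)

lemma shiftProd_indep (k : ℕ) (A : Finset (Fin (2 * k))) :
    IsIndepF (shiftGraph k) (shiftProd k A) := by
  intro a ha b hb hadj
  simp only [shiftProd, Finset.mem_filter] at ha hb
  rcases hadj with ⟨-, h | h⟩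
  · exact ha.2.2 (h ▸ hb.2.1)
  · exact hb.2.2 (h ▸ ha.2.1)

lemma shiftProd_card (k : ℕ) (A : Finset (Fin (2 * k))) :
    (shiftProd k A).card = A.card * Aᶜ.card := by
  classical
  rw [← Finset.card_product]
  apply Finset.card_bij (fun p _ => (p.1.1, p.1.2))
  · intro p hp
    simp only [shiftProd, Finset.mem_filter] at hp
    simp only [Finset.mem_product, Finset.mem_compl]
    exact ⟨hp.2.1, hp.2.2⟩
  · intro p _ q _ h
    apply Subtype.ext
    exact Prod.ext (congrArg Prod.fst h) (congrArg Prod.snd h)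
  · rintro ⟨x, y⟩ hxy
    simp only [Finset.mem_product, Finset.mem_compl] at hxy
    have hne : x ≠ y := fun h => hxy.2 (h ▸ hxy.1)
    refine ⟨⟨(x, y), hne⟩, ?_, rfl⟩
    simp only [shiftProd, Finset.mem_filter, Finset.mem_univ, true_and]
    exact ⟨hxy.1, hxy.2⟩

lemma card_compl_eq (k : ℕ) (A : Finset (Fin (2 * k))) (hA : A.card = k) :
    Aᶜ.card = k := by
  rw [Finset.card_compl, Fintype.card_fin, hA]
  omega

lemma shift_indepNum (k : ℕ) : indepNum (shiftGraph k) = k * k := by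
  classical
  obtain ⟨A, -, hA⟩ := Finset.exists_subset_card_eq
    (s := (Finset.univ : Finset (Fin (2 * k)))) (n := k)
    (by rw [Finset.card_univ, Fintype.card_fin]; omega)
  have hmem : k * k ∈ {n | ∃ s : Finset (ShiftVert k), IsIndepF (shiftGraph k) s ∧ s.card = n} := by
    refine ⟨shiftProd k A, shiftProd_indep k A, ?_⟩
    rw [shiftProd_card, hA, card_compl_eq k A hA]
  have hub : ∀ n ∈ {n | ∃ s : Finset (ShiftVert k), IsIndepF (shiftGraph k) s ∧ s.card = n},
      n ≤ k * k := by
    rintro n ⟨s, hs, rfl⟩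
    exact shift_indep_card_le k s hs
  exact le_antisymm (csSup_le ⟨k * k, hmem⟩ hub) (le_csSup ⟨k * k, hub⟩ hmem)

/-- Every set of at most `k` vertices of `G_k` misses some maximum independent set;
consequently every set of vertices hitting all maximum independent sets has size `≥ k+1`. -/
theorem shiftGraph_hitting_lower_bound (k : ℕ) (hk : 0 < k) :
    (∀ H : Finset (ShiftVert k), H.card ≤ k →
        ∃ s : Finset (ShiftVert k), IsMaxIndep (shiftGraph k) s ∧ Disjoint s H) ∧
      ∀ H : Finset (ShiftVert k),
        (∀ s : Finset (ShiftVert k), IsMaxIndep (shiftGraph k) s → ∃ x ∈ s, x ∈ H) →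
          k + 1 ≤ H.card := by
  classical
  have main : ∀ H : Finset (ShiftVert k), H.card ≤ k →
      ∃ s : Finset (ShiftVert k), IsMaxIndep (shiftGraph k) s ∧ Disjoint s H := by
    intro H hH
    set Hd := H.image (fun p : ShiftVert k => p.1.2) with hHd
    have hHdcard : Hd.card ≤ k := le_trans (Finset.card_image_le) hH
    obtain ⟨A, hsub, hA⟩ : ∃ A : Finset (Fin (2 * k)), Hd ⊆ A ∧ A.card = k := by
      obtain ⟨A, h1, h2, h3⟩ := Finset.exists_subsuperset_card_eq
        (Finset.subset_univ Hd) hHdcard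
        (by rw [Finset.card_univ, Fintype.card_fin]; omega)
      exact ⟨A, h1, h3⟩
    refine ⟨shiftProd k A, ⟨shiftProd_indep k A, ?_⟩, ?_⟩
    · rw [shiftProd_card, hA, card_compl_eq k A hA, shift_indepNum]
    · rw [Finset.disjoint_left]
      intro p hp hpH
      simp only [shiftProd, Finset.mem_filter] at hp
      exact hp.2.2 (hsub (Finset.mem_image_of_mem _ hpH))
  refine ⟨main, fun H hhit => ?_⟩
  by_contra hcon
  obtain ⟨s, hs, hdisj⟩ := main H (by omega)
  obtain ⟨x, hxs, hxH⟩ := hhit s hs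
  exact Finset.disjoint_left.mp hdisj hxs hxH
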